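/- Suppose X : M → ℝ^{2,1} is an isometric embedding of a two-dimensional Riemannian manifold (M,g) whose image is a spacelike submanifold contained in the open future timelike cone, and set u = −½⟨X,X⟩ where ⟨·,·⟩ is the Lorentz–Minkowski inner product. Then ∇_i u = −⟨X, X_i⟩, ∇_i∇_j u = −h_{ij}⟨n⃗, X⟩ − g_{ij}, ⟨X, n⃗⟩² = |∇u|² + 2u, and consequently u satisfies the Monge–Ampère type equation det(∇²u + g)/det(g) = −K_g(|∇u|² + 2u) on M, where n⃗ is the unit (timelike) normal, h_{ij} the second fundamental form, and K_g the Gauss curvature of g. -/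

import Mathlib

/- Common setup: a two-dimensional simply-connected manifold is modeled as ℝ²
(global chart, justified by Cartan–Hadamard for the complete negatively curved
surfaces considered in the paper) endowed with a Riemannian metric tensor field.
All differential-geometric quantities (Christoffel symbols, Gauss curvature,
Hessian, gradient, Riemannian distance, completeness, second fundamental form,
covariant derivatives of tensors, ...) are defined explicitly in coordinates.
ℝ^{2,1} is ℝ³ with the Lorentz–Minkowski inner product `mink`. -/

noncomputable section

open scoped BigOperators

/-- A point of the two–dimensional manifold `M` (global chart). -/
abbrev Pt2 : Type := Fin 2 → ℝ

/-- A point of the Lorentz–Minkowski space `ℝ^{2,1}`. -/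
abbrev Pt3 : Type := Fin 3 → ℝ

/-- A metric tensor field on `M = ℝ²`. -/
abbrev Met2 : Type := Pt2 → Fin 2 → Fin 2 → ℝ

/-- Partial derivative `∂ᵢ f` of a scalar function. -/
def pd (i : Fin 2) (f : Pt2 → ℝ) (x : Pt2) : ℝ := fderiv ℝ f x (Pi.single i 1)

/-- Partial derivative `∂ᵢ F` of an `ℝ^{2,1}`-valued map. -/
def pdV (i : Fin 2) (F : Pt2 → Pt3) (x : Pt2) : Pt3 := fderiv ℝ F x (Pi.single i 1)

/-- Partial derivative `∂ᵢ F` of an `ℝ²`-valued map. -/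
def pdC (i : Fin 2) (F : Pt2 → Pt2) (x : Pt2) : Pt2 := fderiv ℝ F x (Pi.single i 1)

/-- The matrix of the metric at a point. -/
def toMat (g : Met2) (x : Pt2) : Matrix (Fin 2) (Fin 2) ℝ := Matrix.of fun i j => g x i j

/-- The inverse metric `g^{ij}`. -/
def ginv (g : Met2) (x : Pt2) (i j : Fin 2) : ℝ := (toMat g x)⁻¹ i j

/-- `g` is a smooth Riemannian metric on `M = ℝ²`. -/
def IsRiemMetric2 (g : Met2) : Prop :=
  (∀ i j, ContDiff ℝ (⊤ : ℕ∞) fun x => g x i j) ∧ ∀ x, (toMat g x).PosDef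

/-- Christoffel symbols `Γ^k_{ij}` of the metric `g`. -/
def Christoffel (g : Met2) (k i j : Fin 2) (x : Pt2) : ℝ :=
  (1 / 2) * ∑ l, ginv g x k l *
    (pd i (fun y => g y j l) x + pd j (fun y => g y i l) x - pd l (fun y => g y i j) x)

/-- The Gauss curvature `K_g = ⟨R(e₀,e₁)e₁, e₀⟩ / det g` of the metric `g`. -/
def gaussCurvature (g : Met2) (x : Pt2) : ℝ :=
  (∑ l, g x l 0 *
      (pd 0 (Christoffel g l 1 1) x - pd 1 (Christoffel g l 0 1) x +
        ∑ p, (Christoffel g l 0 p x * Christoffel g p 1 1 x -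
              Christoffel g l 1 p x * Christoffel g p 0 1 x))) / (toMat g x).det

/-- The covariant Hessian `∇²u` of a function `u` with respect to `g`. -/
def hess (g : Met2) (u : Pt2 → ℝ) (i j : Fin 2) (x : Pt2) : ℝ :=
  pd i (pd j u) x - ∑ k, Christoffel g k i j x * pd k u x

/-- The squared norm `|∇u|²_g` of the gradient of `u`. -/
def gradSq (g : Met2) (u : Pt2 → ℝ) (x : Pt2) : ℝ :=
  ∑ i, ∑ j, ginv g x i j * pd i u x * pd j u x

/-- The Monge–Ampère type equation
`det(∇²u + g)/det(g) = -K_g (|∇u|² + 2u)` at the point `x`. -/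
def MAeq (g : Met2) (u : Pt2 → ℝ) (x : Pt2) : Prop :=
  (Matrix.of fun i j => hess g u i j x + g x i j).det / (toMat g x).det =
    -gaussCurvature g x * (gradSq g u x + 2 * u x)

/-- Length element of a path with respect to `g`. -/
def pathSpeed (g : Met2) (γ : ℝ → Pt2) (t : ℝ) : ℝ :=
  Real.sqrt (∑ i, ∑ j, g (γ t) i j * deriv γ t i * deriv γ t j)

/-- The Riemannian distance of the metric `g`. -/
def riemDist (g : Met2) (x y : Pt2) : ℝ :=
  sInf {L | ∃ γ : ℝ → Pt2, ContDiff ℝ (⊤ : ℕ∞) γ ∧ γ 0 = x ∧ γ 1 = y ∧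
    L = ∫ t in (0:ℝ)..1, pathSpeed g γ t}

/-- The open geodesic ball `B(x,r)`. -/
def riemBall (g : Met2) (x : Pt2) (r : ℝ) : Set Pt2 := {y | riemDist g x y < r}

/-- The closed geodesic ball `B̄(x,r)`. -/
def riemClosedBall (g : Met2) (x : Pt2) (r : ℝ) : Set Pt2 := {y | riemDist g x y ≤ r}

/-- Completeness of `(M,g)`: Cauchy sequences for the Riemannian distance converge. -/
def RiemComplete (g : Met2) : Prop :=
  ∀ f : ℕ → Pt2,
    (∀ ε : ℝ, 0 < ε → ∃ N, ∀ m, N ≤ m → ∀ n, N ≤ n → riemDist g (f m) (f n) < ε) →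
    ∃ x, ∀ ε : ℝ, 0 < ε → ∃ N, ∀ n, N ≤ n → riemDist g (f n) x < ε

/-- The Lorentz–Minkowski inner product on `ℝ^{2,1}`:
`⟨v,w⟩ = v₁w₁ + v₂w₂ − v₃w₃`. -/
def mink (v w : Pt3) : ℝ := v 0 * w 0 + v 1 * w 1 - v 2 * w 2

/-- A smooth isometric embedding `X : (M,g) → ℝ^{2,1}`: a smooth injective map
whose pullback of the Minkowski metric is `g` (hence a spacelike immersion). -/
structure IsIsometricEmbedding (g : Met2) (X : Pt2 → Pt3) : Prop where
  smooth : ContDiff ℝ (⊤ : ℕ∞) X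
  inj : Function.Injective X
  isometric : ∀ x i j, mink (pdV i X x) (pdV j X x) = g x i j

/-- `X(M)` is the graph `(x₁,x₂,0) ↦ (x₁,x₂,Z(x₁,x₂))` over `ℝ² ⊂ ℝ^{2,1}` of a
function `Z` pinched as `√(a+x₁²+x₂²) ≤ Z(x₁,x₂) ≤ √(b+x₁²+x₂²)`. -/
def IsGraphBetween (X : Pt2 → Pt3) (a b : ℝ) : Prop :=
  ∃ Z : ℝ → ℝ → ℝ,
    Set.range X = {p : Pt3 | p 2 = Z (p 0) (p 1)} ∧
    ∀ x₁ x₂ : ℝ, Real.sqrt (a + x₁ ^ 2 + x₂ ^ 2) ≤ Z x₁ x₂ ∧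
      Z x₁ x₂ ≤ Real.sqrt (b + x₁ ^ 2 + x₂ ^ 2)

/-- `n` is the future-directed unit timelike normal of the spacelike immersion `X`. -/
def IsUnitNormal (X : Pt2 → Pt3) (n : Pt2 → Pt3) : Prop :=
  ∀ x, mink (n x) (n x) = -1 ∧ 0 < n x 2 ∧ ∀ i, mink (n x) (pdV i X x) = 0

/-- Second fundamental form `h_{ij}` of `X` w.r.t. the normal `n`
(so that `∂ᵢ∂ⱼX = Γ^k_{ij} ∂_k X + h_{ij} n`). -/
def secondFF (X : Pt2 → Pt3) (n : Pt2 → Pt3) (i j : Fin 2) (x : Pt2) : ℝ :=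
  -mink (pdV i (pdV j X) x) (n x)

/-- Squared `g`-norm of a covariant 2-tensor. -/
def tensor2NormSq (g : Met2) (T : Fin 2 → Fin 2 → Pt2 → ℝ) (x : Pt2) : ℝ :=
  ∑ i, ∑ j, ∑ k, ∑ l, ginv g x i k * ginv g x j l * T i j x * T k l x

/-- Covariant derivative of a covariant `m`-tensor. -/
def covDer (g : Met2) {m : ℕ} (T : (Fin m → Fin 2) → Pt2 → ℝ)
    (idx : Fin (m + 1) → Fin 2) (x : Pt2) : ℝ :=
  pd (idx 0) (fun y => T (fun a => idx a.succ) y) x -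
    ∑ a : Fin m, ∑ k : Fin 2,
      Christoffel g k (idx 0) (idx a.succ) x *
        T (Function.update (fun b : Fin m => idx b.succ) a k) x

/-- Iterated covariant derivative `∇^p T`. -/
def covDerIter (g : Met2) {m : ℕ} :
    (p : ℕ) → ((Fin m → Fin 2) → Pt2 → ℝ) → (Fin (m + p) → Fin 2) → Pt2 → ℝ
  | 0, T => T
  | p + 1, T => covDer g (covDerIter g p T)

/-- Squared `g`-norm of a covariant `m`-tensor. -/
def tensorNormSq (g : Met2) {m : ℕ} (T : (Fin m → Fin 2) → Pt2 → ℝ) (x : Pt2) : ℝ :=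
  ∑ idx : Fin m → Fin 2, ∑ jdx : Fin m → Fin 2,
    (∏ a, ginv g x (idx a) (jdx a)) * T idx x * T jdx x

/-- The Gauss curvature viewed as a 0-tensor. -/
def curvTensor (g : Met2) : (Fin 0 → Fin 2) → Pt2 → ℝ := fun _ y => gaussCurvature g y

/-- The second fundamental form viewed as a 2-tensor on `M`. -/
def ffTensor (X : Pt2 → Pt3) (n : Pt2 → Pt3) : (Fin 2 → Fin 2) → Pt2 → ℝ :=
  fun idx y => secondFF X n (idx 0) (idx 1) y

/-- `C^{k,α}` bound for `f` on the set `S` (in the global coordinate chart):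
all derivatives up to order `k` bounded by `Cb` and `α`-Hölder bound `Cb`
for the `k`-th derivative. -/
def CkHolderLE (k : ℕ) (α : ℝ) (f : Pt2 → ℝ) (S : Set Pt2) (Cb : ℝ) : Prop :=
  (∀ p, p ≤ k → ∀ x ∈ S, ‖iteratedFDeriv ℝ p f x‖ ≤ Cb) ∧
  ∀ x ∈ S, ∀ y ∈ S, ‖iteratedFDeriv ℝ k f x - iteratedFDeriv ℝ k f y‖ ≤ Cb * ‖x - y‖ ^ α

/-- The Hölder condition `sup_{d(x,y) ≤ 1} |K(x)-K(y)|/d(x,y)^μ ≤ Cμ`. -/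
def HolderCurvLE (g : Met2) (μ Cμ : ℝ) : Prop :=
  ∀ x y, riemDist g x y ≤ 1 →
    |gaussCurvature g x - gaussCurvature g y| ≤ Cμ * riemDist g x y ^ μ

/-- `max_{y ∈ B̄(x,r)} (-K_g(y))`. -/
def supNegK (g : Met2) (x : Pt2) (r : ℝ) : ℝ :=
  sSup ((fun y => -gaussCurvature g y) '' riemClosedBall g x r)

/-- `u` solves the Dirichlet problem `(D_l)` on `Ω = B(x₀,l)`:
`det(∇²u+g)/det g = -K_g(|∇u|²+2u)` in `B(x₀,l)`, `u = 1/(2C₂(l))` on `∂B(x₀,l)`,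
with `∇²u + g > 0`. -/
def IsDirichletSol (g : Met2) (x₀ : Pt2) (l : ℝ) (u : Pt2 → ℝ) : Prop :=
  ContinuousOn u (riemClosedBall g x₀ l) ∧
  ContDiffOn ℝ (⊤ : ℕ∞) u (riemBall g x₀ l) ∧
  (∀ x ∈ riemBall g x₀ l, MAeq g u x) ∧
  (∀ x ∈ riemBall g x₀ l, (Matrix.of fun i j => hess g u i j x + g x i j).PosDef) ∧
  ∀ x, riemDist g x₀ x = l → u x = 1 / (2 * supNegK g x₀ l)

/-- Hyperbolic cotangent. -/
def coth (t : ℝ) : ℝ := Real.cosh t / Real.sinh t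

/-- The quantity `r₀ / (2 √c₂ coth(√c₂ r₀))` with `c₂ = max_{B̄(x̃,r₀)}(-K_g)`. -/
def cutoffBound (g : Met2) (xt : Pt2) (r₀ : ℝ) : ℝ :=
  r₀ / (2 * Real.sqrt (supNegK g xt r₀) * coth (Real.sqrt (supNegK g xt r₀) * r₀))

/-- An isometry of the Lorentz–Minkowski space `ℝ^{2,1}`: an affine bijection
whose linear part preserves the Minkowski inner product. -/
def IsMinkIsometry (ι : Pt3 → Pt3) : Prop :=
  ∃ (L : Pt3 →ₗ[ℝ] Pt3) (b : Pt3),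
    Function.Bijective ι ∧ (∀ v, ι v = L v + b) ∧ ∀ v w, mink (L v) (L w) = mink v w

/-- An isometry of `(M,g)` (a distance-preserving bijection). -/
def IsRiemIsometry (g : Met2) (γ : Pt2 → Pt2) : Prop :=
  Function.Bijective γ ∧ ∀ x y, riemDist g (γ x) (γ y) = riemDist g x y

/-- The unit imaginary sphere `ℍ = {x₃² - x₁² - x₂² = 1, x₃ > 0} ⊂ ℝ^{2,1}`. -/
def Hsheet : Set Pt3 := {v | mink v v = -1 ∧ 0 < v 2}

/-- Inverse hyperbolic cosine. -/
def arcosh (t : ℝ) : ℝ := Real.log (t + Real.sqrt (t ^ 2 - 1))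

/-- `i` is an isometry from `(M, gb)` onto the hyperbolic plane `ℍ`
(with its distance `d_ℍ(v,w) = arcosh(-⟨v,w⟩)`). -/
def IsHyperbolicIsometryOnto (gb : Met2) (i : Pt2 → Pt3) : Prop :=
  Function.Injective i ∧ Set.range i = Hsheet ∧
    ∀ x y, arcosh (-mink (i x) (i y)) = riemDist gb x y

/-- The metric `ḡ = (g + (d√(2u))²)/(2u)`. -/
def conformalBar (g : Met2) (u : Pt2 → ℝ) : Met2 := fun x i j =>
  (g x i j + pd i (fun y => Real.sqrt (2 * u y)) x * pd j (fun y => Real.sqrt (2 * u y)) x)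
    / (2 * u x)

/-- The coordinate disc `{(u¹)² + (u²)² < R²}`. -/
def disc (R : ℝ) : Set Pt2 := {v | (v 0) ^ 2 + (v 1) ^ 2 < R ^ 2}

/-- `(φ,ψ)` is an isothermal coordinate chart for `g` on the disc of radius `R`:
`φ` is a smooth injective parametrization with pullback metric
`ψ [(du¹)² + (du²)²]`. -/
def IsIsothermalChart (g : Met2) (R : ℝ) (φ : Pt2 → Pt2) (ψ : Pt2 → ℝ) : Prop :=
  ContDiffOn ℝ (⊤ : ℕ∞) φ (disc R) ∧ Set.InjOn φ (disc R) ∧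
    ∀ v ∈ disc R, ∀ i j,
      (∑ k, ∑ m, g (φ v) k m * pdC i φ v k * pdC j φ v m) =
        ψ v * (if i = j then 1 else 0)

/-- `max_{B̄(x̃,r)} |∇ log(-K_g)|`. -/
def supGradLogNegK (g : Met2) (xt : Pt2) (r : ℝ) : ℝ :=
  sSup ((fun y => Real.sqrt (gradSq g (fun z => Real.log (-gaussCurvature g z)) y)) ''
    riemClosedBall g xt r)

/-- `max_{B̄(x̃,r)} |∇² log(-K_g)|`. -/
def supHessLogNegK (g : Met2) (xt : Pt2) (r : ℝ) : ℝ :=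
  sSup ((fun y => Real.sqrt
      (tensor2NormSq g (hess g (fun z => Real.log (-gaussCurvature g z))) y)) ''
    riemClosedBall g xt r)

/-! ### Auxiliary calculus lemmas -/

theorem pd_apply {x : Pt2} (F : Pt2 → Pt3) (hF : DifferentiableAt ℝ F x) (i : Fin 2) (a : Fin 3) :
    pd i (fun y => F y a) x = pdV i F x a := by
  have h := ((ContinuousLinearMap.proj a : Pt3 →L[ℝ] ℝ).hasFDerivAt (x := F x)).comp x hF.hasFDerivAt
  have h2 : fderiv ℝ (fun y => F y a) x
      = (ContinuousLinearMap.proj a : Pt3 →L[ℝ] ℝ).comp (fderiv ℝ F x) := h.fderiv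
  simp [pd, pdV, h2]

theorem pd_mul {x : Pt2} {f h : Pt2 → ℝ} (hf : DifferentiableAt ℝ f x) (hh : DifferentiableAt ℝ h x) (i : Fin 2) :
    pd i (fun y => f y * h y) x = pd i f x * h x + f x * pd i h x := by
  simp [pd, fderiv_fun_mul hf hh]; ring

theorem pd_add {x : Pt2} {f h : Pt2 → ℝ} (hf : DifferentiableAt ℝ f x) (hh : DifferentiableAt ℝ h x) (i : Fin 2) :
    pd i (fun y => f y + h y) x = pd i f x + pd i h x := by
  simp [pd, fderiv_fun_add hf hh]

theorem pd_sub {x : Pt2} {f h : Pt2 → ℝ} (hf : DifferentiableAt ℝ f x) (hh : DifferentiableAt ℝ h x) (i : Fin 2) :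
    pd i (fun y => f y - h y) x = pd i f x - pd i h x := by
  simp [pd, fderiv_fun_sub hf hh]


theorem diff_comp {x : Pt2} (F : Pt2 → Pt3) (hF : DifferentiableAt ℝ F x) (a : Fin 3) :
    DifferentiableAt ℝ (fun y => F y a) x :=
  ((ContinuousLinearMap.proj a : Pt3 →L[ℝ] ℝ).differentiableAt).comp x hF

theorem pd_mink {x : Pt2} (F G : Pt2 → Pt3) (hF : DifferentiableAt ℝ F x)
    (hG : DifferentiableAt ℝ G x) (i : Fin 2) :
    pd i (fun y => mink (F y) (G y)) x = mink (pdV i F x) (G x) + mink (F x) (pdV i G x) := by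
  have e : (fun y => mink (F y) (G y))
      = fun y => (fun y => F y 0 * G y 0 + F y 1 * G y 1) y - (fun y => F y 2 * G y 2) y := by
    funext y; simp [mink]
  rw [e, pd_sub (h := fun y => F y 2 * G y 2) (by fun_prop (discharger := exact diff_comp F hF _ <|> exact diff_comp G hG _))
      ((diff_comp F hF 2).mul (diff_comp G hG 2)),
    pd_add (f := fun y => F y 0 * G y 0) (h := fun y => F y 1 * G y 1) ((diff_comp F hF 0).mul (diff_comp G hG 0)) ((diff_comp F hF 1).mul (diff_comp G hG 1)),
    pd_mul (diff_comp F hF 0) (diff_comp G hG 0), pd_mul (diff_comp F hF 1) (diff_comp G hG 1),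
    pd_mul (diff_comp F hF 2) (diff_comp G hG 2),
    pd_apply F hF i 0, pd_apply F hF i 1, pd_apply F hF i 2,
    pd_apply G hG i 0, pd_apply G hG i 1, pd_apply G hG i 2]
  simp [mink]; ring

theorem pd_comm {f : Pt2 → ℝ} (hf : ContDiff ℝ (⊤ : ℕ∞) f) (i j : Fin 2) (x : Pt2) :
    pd i (pd j f) x = pd j (pd i f) x := by
  have hd : Differentiable ℝ f := hf.differentiable (by simp)
  have hf' : ContDiff ℝ (⊤ : ℕ∞) (fderiv ℝ f) := hf.fderiv_right (by simp)
  have key : ∀ v w : Pt2, ∀ y : Pt2,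
      fderiv ℝ (fun z => fderiv ℝ f z w) y v = fderiv ℝ (fderiv ℝ f) y v w := by
    intro v w y
    have h := ((ContinuousLinearMap.apply ℝ ℝ w).hasFDerivAt
        (x := fderiv ℝ f y)).comp y ((hf'.differentiable (by simp)) y).hasFDerivAt
    have h2 : fderiv ℝ (fun z => fderiv ℝ f z w) y
        = (ContinuousLinearMap.apply ℝ ℝ w).comp (fderiv ℝ (fderiv ℝ f) y) := h.fderiv
    simp [h2]
  have sym := second_derivative_symmetric (f := f) (f' := fderiv ℝ f) (f'' := fderiv ℝ (fderiv ℝ f) x)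
    (fun y => (hd y).hasFDerivAt) ((hf'.differentiable (by simp)) x).hasFDerivAt
    (Pi.single i 1) (Pi.single j 1)
  exact (key (Pi.single i 1) (Pi.single j 1) x).trans
    (sym.trans (key (Pi.single j 1) (Pi.single i 1) x).symm)


theorem mink_comm (v w : Pt3) : mink v w = mink w v := by simp [mink]; ring

theorem pd_cmul {x : Pt2} {f : Pt2 → ℝ} (hf : DifferentiableAt ℝ f x) (c : ℝ) (i : Fin 2) :
    pd i (fun y => c * f y) x = c * pd i f x := by
  simp [pd, fderiv_const_mul hf c]

theorem contDiff_pdV {F : Pt2 → Pt3} (hF : ContDiff ℝ (⊤ : ℕ∞) F) (i : Fin 2) :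
    ContDiff ℝ (⊤ : ℕ∞) (pdV i F) := by
  unfold pdV
  exact (ContinuousLinearMap.apply ℝ Pt3 (Pi.single i 1)).contDiff.comp (hF.fderiv_right (m := ((⊤ : ℕ∞) : WithTop ℕ∞)) (by simp))

theorem contDiff_comp3 {F : Pt2 → Pt3} (hF : ContDiff ℝ (⊤ : ℕ∞) F) (a : Fin 3) :
    ContDiff ℝ (⊤ : ℕ∞) (fun y => F y a) :=
  (ContinuousLinearMap.proj a : Pt3 →L[ℝ] ℝ).contDiff.comp hF

theorem contDiff_pd {f : Pt2 → ℝ} (hf : ContDiff ℝ (⊤ : ℕ∞) f) (i : Fin 2) :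
    ContDiff ℝ (⊤ : ℕ∞) (pd i f) := by
  unfold pd
  exact (ContinuousLinearMap.apply ℝ ℝ (Pi.single i 1)).contDiff.comp (hf.fderiv_right (m := ((⊤ : ℕ∞) : WithTop ℕ∞)) (by simp))

theorem pdV_comm {F : Pt2 → Pt3} (hF : ContDiff ℝ (⊤ : ℕ∞) F) (i j : Fin 2) (x : Pt2) (a : Fin 3) :
    pdV i (pdV j F) x a = pdV j (pdV i F) x a := by
  have hd : Differentiable ℝ F := hF.differentiable (by simp)
  have hdi : ∀ k : Fin 2, Differentiable ℝ (pdV k F) :=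
    fun k => (contDiff_pdV hF k).differentiable (by simp)
  have e : ∀ k : Fin 2, (fun y => pdV k F y a) = pd k (fun y => F y a) := by
    intro k; funext y; exact (pd_apply F (hd y) k a).symm
  have h1 : pdV i (pdV j F) x a = pd i (pd j (fun y => F y a)) x := by
    rw [← pd_apply (pdV j F) ((hdi j) x) i a, e j]
  have h2 : pdV j (pdV i F) x a = pd j (pd i (fun y => F y a)) x := by
    rw [← pd_apply (pdV i F) ((hdi i) x) j a, e i]
  rw [h1, h2, pd_comm (contDiff_comp3 hF a) i j x]


theorem det_toMat (g : Met2) (x : Pt2) :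
    (toMat g x).det = g x 0 0 * g x 1 1 - g x 0 1 * g x 1 0 := by
  simp [toMat, Matrix.det_fin_two]

theorem det_toMat_pos {g : Met2} (hg : IsRiemMetric2 g) (x : Pt2) : 0 < (toMat g x).det :=
  (hg.2 x).det_pos

theorem g_mul_ginv {g : Met2} (hg : IsRiemMetric2 g) (x : Pt2) (i j : Fin 2) :
    ∑ l, g x i l * ginv g x l j = if i = j then 1 else 0 := by
  have h := Matrix.mul_nonsing_inv (toMat g x) (det_toMat_pos hg x).ne'.isUnit
  have h2 : (toMat g x * (toMat g x)⁻¹) i j = (1 : Matrix (Fin 2) (Fin 2) ℝ) i j := by rw [h]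
  simpa [Matrix.mul_apply, Matrix.one_apply, toMat, ginv] using h2

theorem ginv_eq {g : Met2} (hg : IsRiemMetric2 g) (x : Pt2) (i j : Fin 2) :
    ginv g x i j = (toMat g x).adjugate i j / (toMat g x).det := by
  rw [ginv, Matrix.inv_def, Ring.inverse_eq_inv]
  simp [Matrix.smul_apply, div_eq_inv_mul]

theorem contDiff_det {g : Met2} (hg : IsRiemMetric2 g) :
    ContDiff ℝ (⊤ : ℕ∞) (fun x => (toMat g x).det) := by
  have e : (fun x => (toMat g x).det) = fun x => g x 0 0 * g x 1 1 - g x 0 1 * g x 1 0 :=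
    funext fun x => det_toMat g x
  rw [e]
  exact ((hg.1 0 0).mul (hg.1 1 1)).sub ((hg.1 0 1).mul (hg.1 1 0))

theorem contDiff_ginv {g : Met2} (hg : IsRiemMetric2 g) (i j : Fin 2) :
    ContDiff ℝ (⊤ : ℕ∞) (fun x => ginv g x i j) := by
  have e : (fun x => ginv g x i j) = fun x => (toMat g x).adjugate i j / (toMat g x).det :=
    funext fun x => ginv_eq hg x i j
  rw [e]
  have hne : ∀ x, (toMat g x).det ≠ 0 := fun x => (det_toMat_pos hg x).ne'
  have hadj : ContDiff ℝ (⊤ : ℕ∞) (fun x => (toMat g x).adjugate i j) := by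
    have e2 : ∀ x, (toMat g x).adjugate = !![g x 1 1, -(g x 0 1); -(g x 1 0), g x 0 0] := by
      intro x; rw [Matrix.adjugate_fin_two]; congr
    simp only [e2]
    fin_cases i <;> fin_cases j <;> simp <;>
      first
        | exact hg.1 1 1
        | exact (hg.1 0 1).neg
        | exact (hg.1 1 0).neg
        | exact hg.1 0 0
  exact hadj.div (contDiff_det hg) hne

theorem contDiff_christoffel {g : Met2} (hg : IsRiemMetric2 g) (k i j : Fin 2) :
    ContDiff ℝ (⊤ : ℕ∞) (fun x => Christoffel g k i j x) := by
  unfold Christoffel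
  refine contDiff_const.mul (ContDiff.sum fun l _ => ?_)
  exact (contDiff_ginv hg k l).mul
    (((contDiff_pd (hg.1 j l) i).add (contDiff_pd (hg.1 i l) j)).sub (contDiff_pd (hg.1 i j) l))


theorem mink_sub_right (e v w : Pt3) : mink e (fun a => v a - w a) = mink e v - mink e w := by
  simp [mink]; ring

theorem mink_right_comb (e : Pt3) (c0 c1 p : ℝ) (w0 w1 nn : Pt3) :
    mink e (fun a => c0 * w0 a + c1 * w1 a - p * nn a)
      = c0 * mink e w0 + c1 * mink e w1 - p * mink e nn := by
  simp [mink]; ring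

theorem frame_exp {g : Met2} (hg : IsRiemMetric2 g) (X n : Pt2 → Pt3) (x : Pt2)
    (hiso : ∀ i j, mink (pdV i X x) (pdV j X x) = g x i j)
    (hnn : mink (n x) (n x) = -1) (hnX : ∀ i, mink (n x) (pdV i X x) = 0)
    (v : Pt3) (a : Fin 3) :
    v a = (∑ k, (∑ l, ginv g x k l * mink v (pdV l X x)) * pdV k X x a)
      - mink v (n x) * n x a := by
  classical
  set E : Fin 3 → Pt3 := ![pdV 0 X x, pdV 1 X x, n x] with hE
  set c : Fin 2 → ℝ := fun k => ∑ l, ginv g x k l * mink v (pdV l X x) with hc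
  set p : ℝ := mink v (n x) with hp
  set w : Pt3 := fun b => c 0 * pdV 0 X x b + c 1 * pdV 1 X x b - p * n x b with hw
  set z : Pt3 := fun b => v b - w b with hz
  -- the matrix implementing mink against the frame
  set M : Matrix (Fin 3) (Fin 3) ℝ := Matrix.of fun i j => E i j with hM
  set D : Matrix (Fin 3) (Fin 3) ℝ := Matrix.diagonal ![1, 1, -1] with hD
  set B : Matrix (Fin 3) (Fin 3) ℝ := M * D with hB
  have hBmv : ∀ u : Pt3, ∀ i : Fin 3, B.mulVec u i = mink (E i) u := by
    intro u i
    simp [hB, hM, hD, Matrix.mulVec, dotProduct, Matrix.mul_apply,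
      Fin.sum_univ_three, mink]
    ring
  -- Gram matrix
  have hGram : B * M.transpose =
      Matrix.of ![![g x 0 0, g x 0 1, 0], ![g x 1 0, g x 1 1, 0], ![0, 0, -1]] := by
    ext i j
    have : (B * M.transpose) i j = mink (E i) (E j) := by
      simp [hB, hM, hD, Matrix.mul_apply, Fin.sum_univ_three, mink]
      ring
    rw [this]
    fin_cases i <;> fin_cases j <;>
      simp [hE, hiso, hnn, hnX, mink_comm _ (n x)] <;>
      first
        | rfl
        | exact hnX _
  have hdetB : B.det ≠ 0 := by
    intro h0
    have h1 : (B * M.transpose).det = -(toMat g x).det := by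
      rw [hGram]
      rw [det_toMat]
      simp [Matrix.det_fin_three]
      ring
    rw [Matrix.det_mul, h0, zero_mul] at h1
    exact (det_toMat_pos hg x).ne' (by linarith)
  -- orthogonality of z against the frame
  have hcomb : ∀ e : Pt3, mink e z = mink e v - (c 0 * mink e (pdV 0 X x)
      + c 1 * mink e (pdV 1 X x) - p * mink e (n x)) := by
    intro e
    rw [show mink e z = mink e v - mink e w from mink_sub_right e v w, hw]
    rw [mink_right_comb]
  have d00 := g_mul_ginv hg x 0 0
  have d01 := g_mul_ginv hg x 0 1
  have d10 := g_mul_ginv hg x 1 0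
  have d11 := g_mul_ginv hg x 1 1
  simp [Fin.sum_univ_two] at d00 d01 d10 d11
  have h0 : mink (pdV 0 X x) z = 0 := by
    rw [hcomb, hc]
    simp only [Fin.sum_univ_two]
    rw [hiso 0 0, hiso 0 1, mink_comm (pdV 0 X x) (n x), hnX 0, mink_comm (pdV 0 X x) v]
    linear_combination (-(mink v (pdV 0 X x))) * d00 - (mink v (pdV 1 X x)) * d01
  have h1 : mink (pdV 1 X x) z = 0 := by
    rw [hcomb, hc]
    simp only [Fin.sum_univ_two]
    rw [hiso 1 0, hiso 1 1, mink_comm (pdV 1 X x) (n x), hnX 1, mink_comm (pdV 1 X x) v]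
    linear_combination (-(mink v (pdV 0 X x))) * d10 - (mink v (pdV 1 X x)) * d11
  have h2 : mink (n x) z = 0 := by
    rw [hcomb, hnX 0, hnX 1, hnn, mink_comm (n x) v, hp]
    ring
  have horth : ∀ i : Fin 3, mink (E i) z = 0 := by
    intro i; fin_cases i <;> assumption
  have hzz : z = 0 := by
    have h1 : B.mulVec z = 0 := by
      funext i; rw [hBmv z i, horth i]; rfl
    have h2 : B⁻¹.mulVec (B.mulVec z) = z := by
      rw [Matrix.mulVec_mulVec, Matrix.nonsing_inv_mul B hdetB.isUnit, Matrix.one_mulVec]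
    rw [h1] at h2
    simpa [Matrix.mulVec_zero] using h2.symm
  have := congrFun hzz a
  simp only [hz, hw, Pi.zero_apply] at this
  have h3 : v a = c 0 * pdV 0 X x a + c 1 * pdV 1 X x a - p * n x a := by linarith
  rw [h3, hc, hp, Fin.sum_univ_two]


section Geometry

variable {g : Met2} {X n : Pt2 → Pt3}

theorem contDiff_mink {F G : Pt2 → Pt3} (hF : ContDiff ℝ (⊤ : ℕ∞) F) (hG : ContDiff ℝ (⊤ : ℕ∞) G) :
    ContDiff ℝ (⊤ : ℕ∞) (fun y => mink (F y) (G y)) := by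
  unfold mink
  exact (((contDiff_comp3 hF 0).mul (contDiff_comp3 hG 0)).add
    ((contDiff_comp3 hF 1).mul (contDiff_comp3 hG 1))).sub
    ((contDiff_comp3 hF 2).mul (contDiff_comp3 hG 2))

theorem g_symm (hiso : ∀ x i j, mink (pdV i X x) (pdV j X x) = g x i j)
    (x : Pt2) (i j : Fin 2) : g x j i = g x i j := by
  rw [← hiso, ← hiso, mink_comm]

theorem pdV_pdV_comm (hXs : ContDiff ℝ (⊤ : ℕ∞) X) (i j : Fin 2) (x : Pt2) :
    pdV i (pdV j X) x = pdV j (pdV i X) x :=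
  funext fun a => pdV_comm hXs i j x a

theorem pd_g (hXs : ContDiff ℝ (⊤ : ℕ∞) X)
    (hiso : ∀ x i j, mink (pdV i X x) (pdV j X x) = g x i j)
    (x : Pt2) (i j l : Fin 2) :
    pd i (fun y => g y j l) x
      = mink (pdV i (pdV j X) x) (pdV l X x) + mink (pdV j X x) (pdV i (pdV l X) x) := by
  have e : (fun y => g y j l) = fun y => mink (pdV j X y) (pdV l X y) :=
    funext fun y => (hiso y j l).symm
  rw [e, pd_mink (pdV j X) (pdV l X)
    (((contDiff_pdV hXs j).differentiable (by simp)) x)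
    (((contDiff_pdV hXs l).differentiable (by simp)) x) i]

theorem christoffel_eq (hg : IsRiemMetric2 g) (hXs : ContDiff ℝ (⊤ : ℕ∞) X)
    (hiso : ∀ x i j, mink (pdV i X x) (pdV j X x) = g x i j)
    (x : Pt2) (k i j : Fin 2) :
    Christoffel g k i j x = ∑ l, ginv g x k l * mink (pdV i (pdV j X) x) (pdV l X x) := by
  unfold Christoffel
  rw [Finset.mul_sum]
  refine Finset.sum_congr rfl fun l _ => ?_
  rw [pd_g hXs hiso x i j l, pd_g hXs hiso x j i l, pd_g hXs hiso x l i j]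
  have f1 : mink (pdV j (pdV i X) x) (pdV l X x) = mink (pdV i (pdV j X) x) (pdV l X x) := by
    rw [pdV_pdV_comm hXs j i x]
  have f2 : mink (pdV l (pdV i X) x) (pdV j X x) = mink (pdV i (pdV l X) x) (pdV j X x) := by
    rw [pdV_pdV_comm hXs l i x]
  have f3 : mink (pdV l (pdV j X) x) (pdV i X x) = mink (pdV j (pdV l X) x) (pdV i X x) := by
    rw [pdV_pdV_comm hXs l j x]
  have c1 : mink (pdV j X x) (pdV i (pdV l X) x) = mink (pdV i (pdV l X) x) (pdV j X x) :=
    mink_comm _ _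
  have c2 : mink (pdV i X x) (pdV j (pdV l X) x) = mink (pdV j (pdV l X) x) (pdV i X x) :=
    mink_comm _ _
  have c3 : mink (pdV i X x) (pdV l (pdV j X) x) = mink (pdV l (pdV j X) x) (pdV i X x) :=
    mink_comm _ _
  linear_combination (ginv g x k l / 2) * (c1 + f1 + c2 - f2 - c3 - f3)

theorem gauss_formula (hg : IsRiemMetric2 g) (hXs : ContDiff ℝ (⊤ : ℕ∞) X)
    (hiso : ∀ x i j, mink (pdV i X x) (pdV j X x) = g x i j)
    (hn : IsUnitNormal X n) (x : Pt2) (j k : Fin 2) :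
    pdV j (pdV k X) x = fun a =>
      Christoffel g 0 j k x * pdV 0 X x a + Christoffel g 1 j k x * pdV 1 X x a
        + secondFF X n j k x * n x a := by
  funext a
  have h := frame_exp hg X n x (hiso x) (hn x).1 (hn x).2.2 (pdV j (pdV k X) x) a
  rw [h]
  have hc0 : Christoffel g 0 j k x = ginv g x 0 0 * mink (pdV j (pdV k X) x) (pdV 0 X x)
      + ginv g x 0 1 * mink (pdV j (pdV k X) x) (pdV 1 X x) := by
    rw [christoffel_eq hg hXs hiso x 0 j k, Fin.sum_univ_two]
  have hc1 : Christoffel g 1 j k x = ginv g x 1 0 * mink (pdV j (pdV k X) x) (pdV 0 X x)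
      + ginv g x 1 1 * mink (pdV j (pdV k X) x) (pdV 1 X x) := by
    rw [christoffel_eq hg hXs hiso x 1 j k, Fin.sum_univ_two]
  rw [hc0, hc1]
  simp only [Fin.sum_univ_two, secondFF]
  ring

theorem mink_left_comb (c0 c1 p : ℝ) (w0 w1 nn e : Pt3) :
    mink (fun a => c0 * w0 a + c1 * w1 a + p * nn a) e
      = c0 * mink w0 e + c1 * mink w1 e + p * mink nn e := by
  simp [mink]; ring

theorem low_gauss (hg : IsRiemMetric2 g) (hXs : ContDiff ℝ (⊤ : ℕ∞) X)
    (hiso : ∀ x i j, mink (pdV i X x) (pdV j X x) = g x i j)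
    (hn : IsUnitNormal X n) (x : Pt2) (j k m : Fin 2) :
    mink (pdV j (pdV k X) x) (pdV m X x)
      = Christoffel g 0 j k x * g x 0 m + Christoffel g 1 j k x * g x 1 m := by
  rw [gauss_formula hg hXs hiso hn x j k, mink_left_comb]
  rw [hiso x 0 m, hiso x 1 m, (hn x).2.2 m]
  ring

theorem yy_prod (hg : IsRiemMetric2 g) (hXs : ContDiff ℝ (⊤ : ℕ∞) X)
    (hiso : ∀ x i j, mink (pdV i X x) (pdV j X x) = g x i j)
    (hn : IsUnitNormal X n) (x : Pt2) (j k i m : Fin 2) :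
    mink (pdV j (pdV k X) x) (pdV i (pdV m X) x)
      = (Christoffel g 0 j k x * Christoffel g 0 i m x * g x 0 0
        + Christoffel g 0 j k x * Christoffel g 1 i m x * g x 0 1
        + Christoffel g 1 j k x * Christoffel g 0 i m x * g x 1 0
        + Christoffel g 1 j k x * Christoffel g 1 i m x * g x 1 1)
        - secondFF X n j k x * secondFF X n i m x := by
  rw [gauss_formula hg hXs hiso hn x j k, gauss_formula hg hXs hiso hn x i m]
  simp only [mink]
  have e00 := hiso x 0 0; have e01 := hiso x 0 1
  have e10 := hiso x 1 0; have e11 := hiso x 1 1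
  have en0 := (hn x).2.2 0; have en1 := (hn x).2.2 1
  have enn := (hn x).1
  simp only [mink] at e00 e01 e10 e11 en0 en1 enn
  linear_combination
    Christoffel g 0 j k x * Christoffel g 0 i m x * e00
    + Christoffel g 0 j k x * Christoffel g 1 i m x * e01
    + Christoffel g 1 j k x * Christoffel g 0 i m x * e10
    + Christoffel g 1 j k x * Christoffel g 1 i m x * e11
    + (Christoffel g 0 i m x * secondFF X n j k x
        + Christoffel g 0 j k x * secondFF X n i m x) * en0
    + (Christoffel g 1 i m x * secondFF X n j k x
        + Christoffel g 1 j k x * secondFF X n i m x) * en1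
    + secondFF X n j k x * secondFF X n i m x * enn

theorem secondFF_symm (hXs : ContDiff ℝ (⊤ : ℕ∞) X) (x : Pt2) (i j : Fin 2) :
    secondFF X n j i x = secondFF X n i j x := by
  unfold secondFF
  rw [pdV_pdV_comm hXs j i x]

theorem christoffel_symm (hg : IsRiemMetric2 g) (hXs : ContDiff ℝ (⊤ : ℕ∞) X)
    (hiso : ∀ x i j, mink (pdV i X x) (pdV j X x) = g x i j)
    (x : Pt2) (k i j : Fin 2) :
    Christoffel g k j i x = Christoffel g k i j x := by
  rw [christoffel_eq hg hXs hiso x k j i, christoffel_eq hg hXs hiso x k i j,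
    pdV_pdV_comm hXs j i x]

end Geometry


theorem gauss_equation {g : Met2} {X n : Pt2 → Pt3} (hg : IsRiemMetric2 g)
    (hXs : ContDiff ℝ (⊤ : ℕ∞) X)
    (hiso : ∀ x i j, mink (pdV i X x) (pdV j X x) = g x i j)
    (hn : IsUnitNormal X n) (x : Pt2) :
    (∑ l, g x l 0 *
        (pd 0 (Christoffel g l 1 1) x - pd 1 (Christoffel g l 0 1) x +
          ∑ p, (Christoffel g l 0 p x * Christoffel g p 1 1 x -
                Christoffel g l 1 p x * Christoffel g p 0 1 x)))
      = -(secondFF X n 0 0 x * secondFF X n 1 1 x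
          - secondFF X n 0 1 x * secondFF X n 0 1 x) := by
  have hY : ∀ j k : Fin 2, ContDiff ℝ (⊤ : ℕ∞) (pdV j (pdV k X)) :=
    fun j k => contDiff_pdV (contDiff_pdV hXs k) j
  have hdY : ∀ (j k : Fin 2) (y : Pt2), DifferentiableAt ℝ (pdV j (pdV k X)) y :=
    fun j k y => ((hY j k).differentiable (by simp)) y
  have hdX : ∀ (k : Fin 2) (y : Pt2), DifferentiableAt ℝ (pdV k X) y :=
    fun k y => ((contDiff_pdV hXs k).differentiable (by simp)) y
  -- function-level lowered Gauss identities
  have P1 : (fun y => mink (pdV 1 (pdV 1 X) y) (pdV 0 X y))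
      = fun y => Christoffel g 0 1 1 y * g y 0 0 + Christoffel g 1 1 1 y * g y 1 0 :=
    funext fun y => low_gauss hg hXs hiso hn y 1 1 0
  have P2 : (fun y => mink (pdV 0 (pdV 1 X) y) (pdV 0 X y))
      = fun y => Christoffel g 0 0 1 y * g y 0 0 + Christoffel g 1 0 1 y * g y 1 0 :=
    funext fun y => low_gauss hg hXs hiso hn y 0 1 0
  -- derivatives computed two ways
  have step1 : pd 0 (fun y => mink (pdV 1 (pdV 1 X) y) (pdV 0 X y)) x
      = pd 0 (fun y => Christoffel g 0 1 1 y * g y 0 0 + Christoffel g 1 1 1 y * g y 1 0) x := by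
    rw [P1]
  have step2 : pd 1 (fun y => mink (pdV 0 (pdV 1 X) y) (pdV 0 X y)) x
      = pd 1 (fun y => Christoffel g 0 0 1 y * g y 0 0 + Christoffel g 1 0 1 y * g y 1 0) x := by
    rw [P2]
  rw [pd_mink _ _ (hdY 1 1 x) (hdX 0 x) 0] at step1
  rw [pd_mink _ _ (hdY 0 1 x) (hdX 0 x) 1] at step2
  rw [pd_add (f := fun y => Christoffel g 0 1 1 y * g y 0 0) (h := fun y => Christoffel g 1 1 1 y * g y 1 0) ((contDiff_christoffel hg 0 1 1).differentiable (by simp) x |>.mul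
        ((hg.1 0 0).differentiable (by simp) x))
      ((contDiff_christoffel hg 1 1 1).differentiable (by simp) x |>.mul
        ((hg.1 1 0).differentiable (by simp) x)) 0,
    pd_mul ((contDiff_christoffel hg 0 1 1).differentiable (by simp) x)
      ((hg.1 0 0).differentiable (by simp) x) 0,
    pd_mul ((contDiff_christoffel hg 1 1 1).differentiable (by simp) x)
      ((hg.1 1 0).differentiable (by simp) x) 0] at step1
  rw [pd_add (f := fun y => Christoffel g 0 0 1 y * g y 0 0) (h := fun y => Christoffel g 1 0 1 y * g y 1 0) ((contDiff_christoffel hg 0 0 1).differentiable (by simp) x |>.mul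
        ((hg.1 0 0).differentiable (by simp) x))
      ((contDiff_christoffel hg 1 0 1).differentiable (by simp) x |>.mul
        ((hg.1 1 0).differentiable (by simp) x)) 1,
    pd_mul ((contDiff_christoffel hg 0 0 1).differentiable (by simp) x)
      ((hg.1 0 0).differentiable (by simp) x) 1,
    pd_mul ((contDiff_christoffel hg 1 0 1).differentiable (by simp) x)
      ((hg.1 1 0).differentiable (by simp) x) 1] at step2
  -- third-derivative symmetry
  have hZc : pdV 0 (pdV 1 (pdV 1 X)) x = pdV 1 (pdV 0 (pdV 1 X)) x :=
    funext fun a => pdV_comm (contDiff_pdV hXs 1) 0 1 x a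
  rw [hZc] at step1
  -- products of second derivatives
  have y1100 := yy_prod hg hXs hiso hn x 1 1 0 0
  have y0110 := yy_prod hg hXs hiso hn x 0 1 1 0
  rw [y1100] at step1
  rw [y0110] at step2
  -- first derivatives of the metric
  have csym := christoffel_symm hg hXs hiso x
  have gsym := g_symm hiso x 0 1
  have pg1 : pd 0 (fun y => g y 0 0) x
      = 2 * (Christoffel g 0 0 0 x * g x 0 0 + Christoffel g 1 0 0 x * g x 0 1) := by
    rw [pd_g hXs hiso x 0 0 0, mink_comm (pdV 0 X x) (pdV 0 (pdV 0 X) x),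
      low_gauss hg hXs hiso hn x 0 0 0, gsym]
    ring
  have pg2 : pd 0 (fun y => g y 1 0) x
      = (Christoffel g 0 0 1 x * g x 0 0 + Christoffel g 1 0 1 x * g x 0 1)
        + (Christoffel g 0 0 0 x * g x 0 1 + Christoffel g 1 0 0 x * g x 1 1) := by
    rw [pd_g hXs hiso x 0 1 0, mink_comm (pdV 1 X x) (pdV 0 (pdV 0 X) x),
      low_gauss hg hXs hiso hn x 0 1 0, low_gauss hg hXs hiso hn x 0 0 1, gsym]
    try ring
  have pg3 : pd 1 (fun y => g y 0 0) x
      = 2 * (Christoffel g 0 0 1 x * g x 0 0 + Christoffel g 1 0 1 x * g x 0 1) := by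
    rw [pd_g hXs hiso x 1 0 0, mink_comm (pdV 0 X x) (pdV 1 (pdV 0 X) x),
      low_gauss hg hXs hiso hn x 1 0 0, gsym, csym 0 0 1, csym 1 0 1]
    ring
  have pg4 : pd 1 (fun y => g y 1 0) x
      = (Christoffel g 0 1 1 x * g x 0 0 + Christoffel g 1 1 1 x * g x 0 1)
        + (Christoffel g 0 0 1 x * g x 0 1 + Christoffel g 1 0 1 x * g x 1 1) := by
    rw [pd_g hXs hiso x 1 1 0, mink_comm (pdV 1 X x) (pdV 1 (pdV 0 X) x),
      low_gauss hg hXs hiso hn x 1 1 0, low_gauss hg hXs hiso hn x 1 0 1, gsym,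
      csym 0 0 1, csym 1 0 1]
    try ring
  rw [pg1, pg2] at step1
  rw [pg3, pg4] at step2
  -- assemble
  simp only [Fin.sum_univ_two]
  simp only [gsym, csym 0 0 1, csym 1 0 1] at step1 step2 ⊢
  have hff : secondFF X n 1 0 x = secondFF X n 0 1 x := secondFF_symm hXs x 0 1
  linear_combination step2 - step1 + secondFF X n 0 1 x * hff


theorem mink_right_comb' (e : Pt3) (c0 c1 p : ℝ) (w0 w1 nn : Pt3) :
    mink e (fun a => c0 * w0 a + c1 * w1 a + p * nn a)
      = c0 * mink e w0 + c1 * mink e w1 + p * mink e nn := by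
  simp [mink]; ring

/-- **Derivation of the Monge–Ampère equation (Section 2.1).** If `X : (M,g) → ℝ^{2,1}`
is an isometric embedding with spacelike image contained in the open future timelike
cone, `n` the unit timelike normal, and `u = -½⟨X,X⟩`, then `∇ᵢu = -⟨X,Xᵢ⟩`,
`∇ᵢ∇ⱼu = -h_{ij}⟨n,X⟩ - g_{ij}`, `⟨X,n⟩² = |∇u|² + 2u`, and consequently
`det(∇²u+g)/det g = -K_g (|∇u|² + 2u)` on `M`. -/
theorem monge_ampere_from_embedding
    (g : Met2) (hg : IsRiemMetric2 g) (X : Pt2 → Pt3) (hX : IsIsometricEmbedding g X)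
    (hcone : ∀ x, Real.sqrt ((X x 0) ^ 2 + (X x 1) ^ 2) < X x 2)
    (n : Pt2 → Pt3) (hn : IsUnitNormal X n)
    (u : Pt2 → ℝ) (hu : u = fun x => -(1 / 2) * mink (X x) (X x)) :
    (∀ x i, pd i u x = -mink (X x) (pdV i X x)) ∧
    (∀ x i j, hess g u i j x = -secondFF X n i j x * mink (n x) (X x) - g x i j) ∧
    (∀ x, (mink (X x) (n x)) ^ 2 = gradSq g u x + 2 * u x) ∧
    ∀ x, MAeq g u x := by
  obtain ⟨hXs, hinj, hiso⟩ := hX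
  have hdX : ∀ y, DifferentiableAt ℝ X y := fun y => hXs.differentiable (by simp) y
  have hdXk : ∀ (k : Fin 2) (y : Pt2), DifferentiableAt ℝ (pdV k X) y :=
    fun k y => (contDiff_pdV hXs k).differentiable (by simp) y
  -- Part 1
  have p1 : ∀ x i, pd i u x = -mink (X x) (pdV i X x) := by
    intro x i
    rw [hu, pd_cmul ((contDiff_mink hXs hXs).differentiable (by simp) x) (-(1/2)) i,
      pd_mink X X (hdX x) (hdX x) i, mink_comm (pdV i X x) (X x)]
    ring
  -- Part 2
  have p2 : ∀ x i j, hess g u i j x = -secondFF X n i j x * mink (n x) (X x) - g x i j := by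
    intro x i j
    unfold hess
    have e : pd j u = fun y => (-1 : ℝ) * mink (X y) (pdV j X y) :=
      funext fun y => by rw [p1 y j]; ring
    rw [e, pd_cmul ((contDiff_mink hXs (contDiff_pdV hXs j)).differentiable (by simp) x) (-1) i,
      pd_mink X (pdV j X) (hdX x) (hdXk j x) i, hiso x i j,
      gauss_formula hg hXs hiso hn x i j, mink_right_comb']
    have e0 : pd 0 u = fun y => (-1 : ℝ) * mink (X y) (pdV 0 X y) :=
      funext fun y => by rw [p1 y 0]; ring
    have e1 : pd 1 u = fun y => (-1 : ℝ) * mink (X y) (pdV 1 X y) :=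
      funext fun y => by rw [p1 y 1]; ring
    simp only [Fin.sum_univ_two, e0, e1]
    rw [mink_comm (X x) (n x)]
    ring
  -- Part 3
  have p3 : ∀ x, (mink (X x) (n x)) ^ 2 = gradSq g u x + 2 * u x := by
    intro x
    have hv : X x = fun a => (∑ k, (∑ l, ginv g x k l * mink (X x) (pdV l X x)) * pdV k X x a)
        - mink (X x) (n x) * n x a :=
      funext fun a => frame_exp hg X n x (hiso x) (hn x).1 (hn x).2.2 (X x) a
    have mXX := congrArg (mink (X x)) hv
    simp only [Fin.sum_univ_two] at mXX
    rw [mink_right_comb] at mXX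
    unfold gradSq
    simp only [Fin.sum_univ_two]
    rw [p1 x 0, p1 x 1, hu]
    linear_combination mXX
  refine ⟨p1, p2, p3, fun x => ?_⟩
  -- Part 4
  have hdet := det_toMat_pos hg x
  unfold MAeq gaussCurvature
  rw [Matrix.det_fin_two]
  simp only [Matrix.of_apply]
  have e00 : hess g u 0 0 x + g x 0 0 = -secondFF X n 0 0 x * mink (n x) (X x) := by
    rw [p2 x 0 0]; ring
  have e01 : hess g u 0 1 x + g x 0 1 = -secondFF X n 0 1 x * mink (n x) (X x) := by
    rw [p2 x 0 1]; ring
  have e10 : hess g u 1 0 x + g x 1 0 = -secondFF X n 1 0 x * mink (n x) (X x) := by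
    rw [p2 x 1 0]; ring
  have e11 : hess g u 1 1 x + g x 1 1 = -secondFF X n 1 1 x * mink (n x) (X x) := by
    rw [p2 x 1 1]; ring
  rw [e00, e01, e10, e11, gauss_equation hg hXs hiso hn x, ← p3 x,
    secondFF_symm hXs x 0 1 (n := n), mink_comm (X x) (n x)]
  field_simp

end
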